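/- arXiv:1909.07062 — 3 statements merged into one kernel-verified Lean document; each statement's English description precedes it below -/
import Mathlib

section
/- The Leech lattice contains no vectors of norm 2, i.e. for every nonzero x in the Leech lattice, (x,x) ≥ 4. -/
/-- The generator matrix `[I₁₂ | A]` of the binary Golay code. -/
def golayGenMatrix : Matrix (Fin 12) (Fin 24) (ZMod 2) :=
  !![1, 0, 0, 0, 0, 0, 0, 0, 0, 0, 0, 0, 0, 0, 1, 1, 0, 0, 1, 1, 1, 1, 0, 1;
    0, 1, 0, 0, 0, 0, 0, 0, 0, 0, 0, 0, 1, 0, 0, 1, 1, 0, 0, 1, 1, 1, 1, 0;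
    0, 0, 1, 0, 0, 0, 0, 0, 0, 0, 0, 0, 1, 1, 0, 0, 1, 1, 0, 0, 0, 1, 1, 1;
    0, 0, 0, 1, 0, 0, 0, 0, 0, 0, 0, 0, 0, 1, 1, 0, 0, 1, 1, 0, 1, 0, 1, 1;
    0, 0, 0, 0, 1, 0, 0, 0, 0, 0, 0, 0, 0, 1, 1, 1, 1, 0, 0, 1, 0, 0, 1, 1;
    0, 0, 0, 0, 0, 1, 0, 0, 0, 0, 0, 0, 1, 0, 1, 1, 1, 1, 0, 0, 1, 0, 0, 1;
    0, 0, 0, 0, 0, 0, 1, 0, 0, 0, 0, 0, 1, 1, 0, 1, 0, 1, 1, 0, 1, 1, 0, 0;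
    0, 0, 0, 0, 0, 0, 0, 1, 0, 0, 0, 0, 1, 1, 1, 0, 0, 0, 1, 1, 0, 1, 1, 0;
    0, 0, 0, 0, 0, 0, 0, 0, 1, 0, 0, 0, 1, 0, 0, 1, 0, 1, 1, 1, 0, 0, 1, 1;
    0, 0, 0, 0, 0, 0, 0, 0, 0, 1, 0, 0, 1, 1, 0, 0, 1, 0, 1, 1, 1, 0, 0, 1;
    0, 0, 0, 0, 0, 0, 0, 0, 0, 0, 1, 0, 0, 1, 1, 0, 1, 1, 0, 1, 1, 1, 0, 0;
    0, 0, 0, 0, 0, 0, 0, 0, 0, 0, 0, 1, 0, 0, 1, 1, 1, 1, 1, 0, 0, 1, 1, 0]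

/-- The binary Golay code: the span of the rows of the generator matrix. -/
def golayCode : Submodule (ZMod 2) (Fin 24 → ZMod 2) :=
  Submodule.span (ZMod 2) (Set.range fun i : Fin 12 => golayGenMatrix i)

/-- The Leech lattice, as a subset of `ℝ²⁴` with scalar product
`(x,y) = (1/8)∑ xᵢyᵢ`: vectors `2c + 4x` with `∑xᵢ` even and `1 + 2c + 4y` with
`∑yᵢ` odd, where `c` runs over the Golay code. -/
def leechLattice : Set (Fin 24 → ℝ) :=
  {w | ∃ c ∈ golayCode, ∃ x : Fin 24 → ℤ,
    ((∑ i, x i) % 2 = 0 ∧ w = fun i => 2 * ((c i).val : ℝ) + 4 * (x i : ℝ)) ∨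
    ((∑ i, x i) % 2 = 1 ∧ w = fun i => 1 + 2 * ((c i).val : ℝ) + 4 * (x i : ℝ))}

/-!
Writing `c̄ᵢ ∈ {0, 1}` for the integer lifts of a Golay codeword `c` of weight `W`, one has
`∑ (2c̄ᵢ + 4xᵢ)² = 4W + 16 ∑ xᵢ(xᵢ + c̄ᵢ)` and
`∑ (1 + 2c̄ᵢ + 4xᵢ)² = 24 + 8W + 8 ∑ xᵢ + 16 ∑ xᵢ(xᵢ + c̄ᵢ)`, and `xᵢ(xᵢ + c̄ᵢ) ≥ 0`.
Every Golay codeword has even weight, and a nonzero one has weight at least `8`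
(checked over all `2¹²` codewords, encoded as bit masks). Hence a vector `2c + 4x` has
`∑ wᵢ² ≥ 4W ≥ 32` when `c ≠ 0`, and `∑ wᵢ² = 16 ∑ xᵢ² ≥ 32` when `c = 0`, because `∑ xᵢ²` is
even like `∑ xᵢ`. For `1 + 2c + 4x` all coordinates are odd, so `∑ wᵢ² ≥ 24`, while
`∑ wᵢ² ≡ 24 + 8 ≡ 0 (mod 16)` as `W` is even and `∑ xᵢ` odd; hence `∑ wᵢ² ≥ 32`.
-/

open Finset

section BitMasks

def bitsVec (k n : ℕ) : Fin k → ZMod 2 := fun j => if n.testBit j then 1 else 0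

def popcount (k n : ℕ) : ℕ := #{j : Fin k | n.testBit j}

def xorCombination {n : ℕ} (r : Fin n → ℕ) (m : Fin n → ZMod 2) : ℕ :=
  (List.finRange n).foldr (fun i acc => (if m i = 1 then r i else 0) ^^^ acc) 0

variable {k : ℕ}

@[simp]
lemma bitsVec_zero : bitsVec k 0 = 0 := by
  funext j
  simp [bitsVec]

lemma bitsVec_xor (a b : ℕ) : bitsVec k (a ^^^ b) = bitsVec k a + bitsVec k b := by
  funext j
  simp only [bitsVec, Nat.testBit_xor, Pi.add_apply]
  cases a.testBit j <;> cases b.testBit j <;> decide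

lemma bitsVec_ite (a : ZMod 2) (r : ℕ) :
    bitsVec k (if a = 1 then r else 0) = a • bitsVec k r := by
  obtain rfl | rfl : a = 0 ∨ a = 1 := by revert a; decide
  · rw [if_neg zero_ne_one, zero_smul, bitsVec_zero]
  · rw [if_pos rfl, one_smul]

lemma bitsVec_xorCombination {n : ℕ} (r : Fin n → ℕ) (m : Fin n → ZMod 2) :
    bitsVec k (xorCombination r m) = ∑ i, m i • bitsVec k (r i) := by
  rw [xorCombination, Fin.sum_univ_def]
  induction List.finRange n with
  | nil => simp
  | cons i l ih => simp [bitsVec_xor, bitsVec_ite, ih]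

lemma hammingNorm_bitsVec (n : ℕ) : hammingNorm (bitsVec k n) = popcount k n := by
  simp only [hammingNorm, popcount, bitsVec]
  congr 1
  ext j
  by_cases h : n.testBit j <;> simp [h]

end BitMasks

section GolayCode

def golayRowMask : Fin 12 → ℕ :=
  ![12369921, 7966722, 14888964, 14049288, 13230096, 9687072, 3584064, 7106688,
    13537536, 10301952, 3892224, 6801408]

lemma golayGenMatrix_eq : golayGenMatrix = Matrix.of fun i => bitsVec 24 (golayRowMask i) := by
  decide

set_option maxRecDepth 100000 in
lemma golayRowMask_xorCombination_weight : ∀ m : Fin 12 → ZMod 2,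
    Even (popcount 24 (xorCombination golayRowMask m)) ∧
      (xorCombination golayRowMask m = 0 ∨ 8 ≤ popcount 24 (xorCombination golayRowMask m)) := by
  decide +kernel

theorem golayCode_weight {c : Fin 24 → ZMod 2} (hc : c ∈ golayCode) :
    Even (hammingNorm c) ∧ (c = 0 ∨ 8 ≤ hammingNorm c) := by
  obtain ⟨m, rfl⟩ := (Submodule.mem_span_range_iff_exists_fun (ZMod 2)).mp hc
  have hmask : ∑ i, m i • golayGenMatrix i = bitsVec 24 (xorCombination golayRowMask m) := by
    rw [bitsVec_xorCombination, golayGenMatrix_eq]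
    rfl
  rw [hmask, hammingNorm_bitsVec]
  obtain ⟨heven, hzero | hweight⟩ := golayRowMask_xorCombination_weight m
  · exact ⟨heven, .inl (by rw [hzero, bitsVec_zero])⟩
  · exact ⟨heven, .inr hweight⟩

end GolayCode

section IntegerVectors

variable {ι : Type*} [Fintype ι]

lemma ZMod.val_two_sq (a : ZMod 2) : (a.val : ℤ) ^ 2 = a.val := by
  revert a
  decide

lemma ZMod.mul_add_val_two_nonneg (t : ℤ) (a : ZMod 2) : 0 ≤ t * (t + a.val) := by
  have : a.val < 2 := a.val_lt
  rcases le_or_gt 0 t with h | h <;> nlinarith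

lemma sum_val_eq_hammingNorm (c : ι → ZMod 2) : ∑ i, ((c i).val : ℤ) = hammingNorm c := by
  rw [hammingNorm, natCast_card_filter]
  refine sum_congr rfl fun i _ => ?_
  generalize c i = a
  revert a
  decide

lemma even_sum_sq_iff (x : ι → ℤ) : Even (∑ i, x i ^ 2) ↔ Even (∑ i, x i) := by
  have : Even (∑ i, x i ^ 2 - ∑ i, x i) := by
    rw [← sum_sub_distrib]
    refine even_sum _ fun i _ => ?_
    simpa [sq, mul_sub] using Int.even_mul_pred_self (x i)
  exact Int.even_sub.mp this

lemma two_le_sum_sq_of_even_sum {x : ι → ℤ} (hx : x ≠ 0) (h : Even (∑ i, x i)) :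
    2 ≤ ∑ i, x i ^ 2 := by
  obtain ⟨j, hj⟩ := Function.ne_iff.mp hx
  have hpos : 0 < ∑ i, x i ^ 2 :=
    (sq_pos_of_ne_zero hj).trans_le (single_le_sum (fun i _ => sq_nonneg (x i)) (mem_univ j))
  obtain ⟨k, hk⟩ := (even_sum_sq_iff x).mpr h
  omega

def leechEvenVec (c : ι → ZMod 2) (x : ι → ℤ) : ι → ℤ := fun i => 2 * (c i).val + 4 * x i

def leechOddVec (c : ι → ZMod 2) (x : ι → ℤ) : ι → ℤ := fun i => 1 + 2 * (c i).val + 4 * x i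

lemma sum_sq_leechEvenVec (c : ι → ZMod 2) (x : ι → ℤ) :
    ∑ i, leechEvenVec c x i ^ 2 = 4 * hammingNorm c + 16 * ∑ i, x i * (x i + (c i).val) := by
  rw [← sum_val_eq_hammingNorm, mul_sum, mul_sum, ← sum_add_distrib]
  refine sum_congr rfl fun i _ => ?_
  unfold leechEvenVec
  linear_combination 4 * ZMod.val_two_sq (c i)

lemma sum_sq_leechOddVec (c : ι → ZMod 2) (x : ι → ℤ) :
    ∑ i, leechOddVec c x i ^ 2 = Fintype.card ι + 8 * hammingNorm c + 8 * ∑ i, x i +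
      16 * ∑ i, x i * (x i + (c i).val) := by
  have hcard : (Fintype.card ι : ℤ) = ∑ _i : ι, 1 := by simp
  rw [hcard, ← sum_val_eq_hammingNorm, mul_sum, mul_sum, mul_sum, ← sum_add_distrib,
    ← sum_add_distrib, ← sum_add_distrib]
  refine sum_congr rfl fun i _ => ?_
  unfold leechOddVec
  linear_combination 4 * ZMod.val_two_sq (c i)

end IntegerVectors

theorem thirtyTwo_le_sum_sq_leechEvenVec {c : Fin 24 → ZMod 2} (hc : c ∈ golayCode)
    {x : Fin 24 → ℤ} (hx : Even (∑ i, x i)) (hv : leechEvenVec c x ≠ 0) :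
    32 ≤ ∑ i, leechEvenVec c x i ^ 2 := by
  obtain rfl | hweight := (golayCode_weight hc).2
  · have hx0 : x ≠ 0 := by
      rintro rfl
      exact hv (funext fun i => by simp [leechEvenVec])
    have hsum : ∑ i, leechEvenVec 0 x i ^ 2 = 16 * ∑ i, x i ^ 2 := by
      simp [leechEvenVec, mul_sum, mul_pow]
    linarith [two_le_sum_sq_of_even_sum hx0 hx]
  · have hnonneg : 0 ≤ ∑ i, x i * (x i + (c i).val) :=
      sum_nonneg fun i _ => ZMod.mul_add_val_two_nonneg (x i) (c i)
    have h8 : (8 : ℤ) ≤ hammingNorm c := mod_cast hweight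
    linarith [sum_sq_leechEvenVec c x]

theorem thirtyTwo_le_sum_sq_leechOddVec {c : Fin 24 → ZMod 2} (hc : c ∈ golayCode)
    {x : Fin 24 → ℤ} (hx : Odd (∑ i, x i)) : 32 ≤ ∑ i, leechOddVec c x i ^ 2 := by
  have hodd : ∀ i, 1 ≤ leechOddVec c x i ^ 2 := fun i =>
    (one_le_sq_iff_one_le_abs _).mpr (Int.one_le_abs (by unfold leechOddVec; omega))
  have h24 : 24 ≤ ∑ i, leechOddVec c x i ^ 2 := by
    simpa using card_nsmul_le_sum univ _ 1 fun i _ => hodd i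
  obtain ⟨a, ha⟩ := (golayCode_weight hc).1
  obtain ⟨b, hb⟩ := hx
  have hexp := sum_sq_leechOddVec c x
  rw [Fintype.card_fin, ha, hb] at hexp
  -- `∑ wᵢ² = 32 + 16 (a + b + ∑ xᵢ(xᵢ + c̄ᵢ))` is a multiple of 16 that is at least 24
  omega

lemma four_le_leechNorm {v : Fin 24 → ℤ} (h : 32 ≤ ∑ i, v i ^ 2) :
    4 ≤ (1 / 8) * ∑ i, (v i : ℝ) * (v i : ℝ) := by
  have : (32 : ℝ) ≤ ∑ i, (v i : ℝ) * (v i : ℝ) := by exact_mod_cast (by simpa [sq] using h)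
  linarith

/-- The Leech lattice contains no vectors of norm 2: every nonzero vector has
norm `(x,x) = (1/8)*sum x_i^2` at least `4`. -/
theorem stmt8 (w : Fin 24 → ℝ) (hw : w ∈ leechLattice) (hw0 : w ≠ 0) :
    4 ≤ (1 / 8) * ∑ i, w i * w i := by
  obtain ⟨c, hc, x, ⟨hpar, rfl⟩ | ⟨hpar, rfl⟩⟩ := hw
  · have hcast : (fun i => 2 * ((c i).val : ℝ) + 4 * (x i : ℝ)) =
        fun i => (leechEvenVec c x i : ℝ) := by
      funext i
      push_cast [leechEvenVec]
      rfl
    rw [hcast] at hw0 ⊢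
    refine four_le_leechNorm (thirtyTwo_le_sum_sq_leechEvenVec hc (Int.even_iff.mpr hpar) ?_)
    exact fun h => hw0 (funext fun i => by simp [h])
  · have hcast : (fun i => 1 + 2 * ((c i).val : ℝ) + 4 * (x i : ℝ)) =
        fun i => (leechOddVec c x i : ℝ) := by
      funext i
      push_cast [leechOddVec]
      rfl
    rw [hcast]
    exact four_le_leechNorm (thirtyTwo_le_sum_sq_leechOddVec hc (Int.odd_iff.mpr hpar))
end

section
/- The Leech lattice Λ (as defined via the Golay code construction) is an even lattice: (x,x) ∈ 2ℤ for all x ∈ Λ. -/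
/-!
Write a Leech vector as `ε + 2c + 4x` with `ε ∈ {0, 1}` and `c` a Golay word, lifted to a
`0/1`-vector. Since `cᵢ² = cᵢ`, `∑ (ε + 2cᵢ + 4xᵢ)²` is `4 wt(c)` modulo `16` when `ε = 0` and
`24 + 8 wt(c) + 8 ∑ xᵢ` when `ε = 1`. Both vanish modulo `16` because the Golay code is doubly
even (`4 ∣ wt(c)`) and `∑ xᵢ` is odd in the second case. Double evenness follows from
`wt(c + c') = wt(c) + wt(c') - 2 wt(c * c')`, where `wt(c * c')` is even as the code is
self-orthogonal; so it suffices to check it, and orthogonality, on the twelve generators.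
-/

open Finset Matrix

section DotProduct

variable {ι R : Type*} [Fintype ι] [CommSemiring R]

theorem dotProduct_eq_zero_of_mem_span {S : Set (ι → R)}
    (hS : ∀ s ∈ S, ∀ t ∈ S, s ⬝ᵥ t = 0) {x y : ι → R}
    (hx : x ∈ Submodule.span R S) (hy : y ∈ Submodule.span R S) : x ⬝ᵥ y = 0 := by
  induction hx using Submodule.span_induction with
  | mem s hs =>
    induction hy using Submodule.span_induction with
    | mem t ht => exact hS s hs t ht
    | zero => exact dotProduct_zero s
    | add y z _ _ hy hz => rw [dotProduct_add, hy, hz, add_zero]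
    | smul a y _ hy => rw [dotProduct_smul, hy, smul_zero]
  | zero => exact zero_dotProduct y
  | add s t _ _ hs ht => rw [add_dotProduct, hs, ht, add_zero]
  | smul a s _ hs => rw [smul_dotProduct, hs, smul_zero]

end DotProduct

namespace BinaryWord

variable {ι : Type*} [Fintype ι]

def weight (c : ι → ZMod 2) : ℤ := ∑ i, ((c i).val : ℤ)

theorem val_add (a b : ZMod 2) : ((a + b).val : ℤ) = a.val + b.val - 2 * (a * b).val := by
  decide +revert

theorem val_mul_self (a : ZMod 2) : (a.val : ℤ) * a.val = a.val := by
  decide +revert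

theorem weight_add (x y : ι → ZMod 2) :
    weight (x + y) = weight x + weight y - 2 * weight (x * y) := by
  simp only [weight, Pi.add_apply, Pi.mul_apply, val_add, sum_sub_distrib, sum_add_distrib,
    mul_sum]

theorem two_dvd_weight_iff (x : ι → ZMod 2) : 2 ∣ weight x ↔ ∑ i, x i = 0 := by
  rw [show (2 : ℤ) = (2 : ℕ) from rfl, ← ZMod.intCast_zmod_eq_zero_iff_dvd, weight]
  push_cast [ZMod.natCast_val, ZMod.cast_id]
  rfl

theorem four_dvd_weight_of_mem_span {S : Set (ι → ZMod 2)} (hS : ∀ s ∈ S, 4 ∣ weight s)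
    (hSS : ∀ s ∈ S, ∀ t ∈ S, s ⬝ᵥ t = 0) {c : ι → ZMod 2}
    (hc : c ∈ Submodule.span (ZMod 2) S) : 4 ∣ weight c := by
  induction hc using Submodule.span_induction with
  | mem s hs => exact hS s hs
  | zero => simp [weight]
  | add x y hx hy hx4 hy4 =>
    obtain ⟨k, hk⟩ := (two_dvd_weight_iff (x * y)).2 (dotProduct_eq_zero_of_mem_span hSS hx hy)
    rw [weight_add, hk]
    omega
  | smul a x _ hx4 =>
    obtain rfl | rfl : a = 0 ∨ a = 1 := by decide +revert
    · simp [weight]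
    · rwa [one_smul]

theorem sum_sq_two_mul_add_four_mul (c : ι → ZMod 2) (x : ι → ℤ) :
    ∑ i, (2 * ((c i).val : ℤ) + 4 * x i) ^ 2
      = 4 * weight c + 16 * ∑ i, ((c i).val * x i + x i ^ 2) := by
  simp only [weight, mul_sum, ← sum_add_distrib]
  exact sum_congr rfl fun i _ => by linear_combination 4 * val_mul_self (c i)

theorem sum_sq_one_add_two_mul_add_four_mul (c : ι → ZMod 2) (x : ι → ℤ) :
    ∑ i, (1 + 2 * ((c i).val : ℤ) + 4 * x i) ^ 2
      = Fintype.card ι + 8 * weight c + 8 * ∑ i, x i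
        + 16 * ∑ i, ((c i).val * x i + x i ^ 2) := by
  rw [← card_univ, card_eq_sum_ones, Nat.cast_sum]
  simp only [weight, mul_sum, ← sum_add_distrib]
  exact sum_congr rfl fun i _ => by linear_combination 4 * val_mul_self (c i)

end BinaryWord

open BinaryWord

theorem golayCode_four_dvd_weight {c : Fin 24 → ZMod 2} (hc : c ∈ golayCode) : 4 ∣ weight c :=
  four_dvd_weight_of_mem_span (Set.forall_mem_range.2 (by decide))
    (Set.forall_mem_range.2 fun i => Set.forall_mem_range.2 fun j => by decide +revert) hc

theorem exists_norm_eq_two_mul_of_sixteen_dvd {ι : Type*} [Fintype ι] (v : ι → ℤ)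
    (hv : 16 ∣ ∑ i, v i ^ 2) : ∃ m : ℤ, (1 / 8) * ∑ i, (v i : ℝ) * v i = 2 * (m : ℝ) := by
  obtain ⟨m, hm⟩ := hv
  refine ⟨m, ?_⟩
  have hm' : ((∑ i, v i ^ 2 : ℤ) : ℝ) = 16 * m := by exact_mod_cast hm
  push_cast at hm'
  simp only [← sq, hm']
  ring

/-- The Leech lattice is even: `(x,x) = (1/8)∑ xᵢ² ∈ 2ℤ` for every lattice vector. -/
theorem stmt9 (w : Fin 24 → ℝ) (hw : w ∈ leechLattice) :
    ∃ m : ℤ, (1 / 8) * ∑ i, w i * w i = 2 * (m : ℝ) := by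
  obtain ⟨c, hc, x, ⟨hx, rfl⟩ | ⟨hx, rfl⟩⟩ := hw
  · have hv := exists_norm_eq_two_mul_of_sixteen_dvd (fun i => 2 * ((c i).val : ℤ) + 4 * x i)
    push_cast at hv
    refine hv ?_
    rw [sum_sq_two_mul_add_four_mul]
    have := golayCode_four_dvd_weight hc
    omega
  · have hv := exists_norm_eq_two_mul_of_sixteen_dvd
      (fun i => 1 + 2 * ((c i).val : ℤ) + 4 * x i)
    push_cast at hv
    refine hv ?_
    rw [sum_sq_one_add_two_mul_add_four_mul, Fintype.card_fin]
    have := golayCode_four_dvd_weight hc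
    omega
end

section
/- Every nonzero codeword of the binary Golay code (generated by the given 24×12 generator matrix) has Hamming weight at least 8; equivalently, the minimum distance of the Golay code is 8. -/
open Finset Matrix

section Binary

variable {ι : Type*} [Fintype ι]

theorem hammingNorm_add_add_two_mul_card_inter (u v : ι → ZMod 2) :
    hammingNorm (u + v) + 2 * #{i | u i ≠ 0 ∧ v i ≠ 0} = hammingNorm u + hammingNorm v := by
  have hpoint : ∀ a b : ZMod 2,
      ((if a + b ≠ 0 then 1 else 0) + 2 * if a ≠ 0 ∧ b ≠ 0 then 1 else 0) =
        (if a ≠ 0 then 1 else 0) + if b ≠ 0 then 1 else 0 := by decide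
  simp only [hammingNorm, card_filter, mul_sum, ← sum_add_distrib, Pi.add_apply, hpoint]

theorem dotProduct_eq_card_inter (u v : ι → ZMod 2) :
    u ⬝ᵥ v = #{i | u i ≠ 0 ∧ v i ≠ 0} := by
  have hpoint : ∀ a b : ZMod 2, a * b = ((if a ≠ 0 ∧ b ≠ 0 then 1 else 0 : ℕ) : ZMod 2) := by decide
  simp only [dotProduct, card_filter, Nat.cast_sum, hpoint]

theorem four_dvd_hammingNorm_add {u v : ι → ZMod 2} (hu : 4 ∣ hammingNorm u)
    (hv : 4 ∣ hammingNorm v) (huv : u ⬝ᵥ v = 0) : 4 ∣ hammingNorm (u + v) := by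
  rw [dotProduct_eq_card_inter, ZMod.natCast_eq_zero_iff] at huv
  have := hammingNorm_add_add_two_mul_card_inter u v
  omega

theorem dotProduct_eq_zero_of_mem_span_s10 {R : Type*} [CommSemiring R] {s : Set (ι → R)}
    (hs : ∀ u ∈ s, ∀ v ∈ s, u ⬝ᵥ v = 0) {u v : ι → R} (hu : u ∈ Submodule.span R s)
    (hv : v ∈ Submodule.span R s) : u ⬝ᵥ v = 0 := by
  have hsv : ∀ u ∈ s, u ⬝ᵥ v = 0 := fun u hu => by
    induction hv using Submodule.span_induction with
    | mem v hv => exact hs u hu v hv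
    | zero => exact dotProduct_zero u
    | add v w _ _ hv hw => rw [dotProduct_add, hv, hw, add_zero]
    | smul a v _ hv => rw [dotProduct_smul, hv, smul_zero]
  induction hu using Submodule.span_induction with
  | mem u hu => exact hsv u hu
  | zero => exact zero_dotProduct v
  | add u w _ _ hu hw => rw [add_dotProduct, hu, hw, add_zero]
  | smul a u _ hu => rw [smul_dotProduct, hu, smul_zero]

theorem four_dvd_hammingNorm_of_mem_span {s : Set (ι → ZMod 2)}
    (hs : ∀ u ∈ s, ∀ v ∈ s, u ⬝ᵥ v = 0) (h4 : ∀ u ∈ s, 4 ∣ hammingNorm u) {u : ι → ZMod 2}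
    (hu : u ∈ Submodule.span (ZMod 2) s) : 4 ∣ hammingNorm u := by
  induction hu using Submodule.span_induction with
  | mem u hu => exact h4 u hu
  | zero => simp
  | add u v hu hv hu4 hv4 =>
    exact four_dvd_hammingNorm_add hu4 hv4 (dotProduct_eq_zero_of_mem_span_s10 hs hu hv)
  | smul a u _ hu4 =>
    obtain rfl | rfl : a = 0 ∨ a = 1 := by revert a; decide
    · simp
    · rwa [one_smul]

end Binary

section Systematic

variable {R : Type*} [Semiring R] [DecidableEq R]

theorem hammingNorm_fin_add {m n : ℕ} (c : Fin (m + n) → R) :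
    hammingNorm c = hammingNorm (c ∘ Fin.castAdd n) + hammingNorm (c ∘ Fin.natAdd m) := by
  simp only [hammingNorm, card_filter, Fin.sum_univ_add, Function.comp_apply]

theorem hammingNorm_vecMul_of_submatrix_castAdd_eq_one {m n : ℕ}
    {G : Matrix (Fin m) (Fin (m + n)) R} (hG : G.submatrix id (Fin.castAdd n) = 1)
    (x : Fin m → R) :
    hammingNorm (x ᵥ* G) = hammingNorm x + hammingNorm (x ᵥ* G.submatrix id (Fin.natAdd m)) := by
  have hleft : (x ᵥ* G) ∘ Fin.castAdd n = x ᵥ* G.submatrix id (Fin.castAdd n) := rfl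
  rw [hammingNorm_fin_add, hleft, hG, vecMul_one]
  rfl

end Systematic

section LowWeight

variable {m ι : Type*} [Fintype m]

theorem vecMul_eq_sum_support (x : m → ZMod 2) (M : Matrix m ι (ZMod 2)) :
    x ᵥ* M = ∑ i ∈ {i | x i ≠ 0}, M.row i := by
  rw [vecMul_eq_sum, sum_filter, row_def]
  refine sum_congr rfl fun i _ => ?_
  obtain h | h : x i = 0 ∨ x i = 1 := by generalize x i = a; revert a; decide
  all_goals simp [h]

theorem le_hammingNorm_vecMul_of_hammingNorm_le_two [DecidableEq m] [Fintype ι]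
    {M : Matrix m ι (ZMod 2)} {d : ℕ} (h1 : ∀ i, d ≤ hammingNorm (M.row i))
    (h2 : ∀ i j, i ≠ j → d ≤ hammingNorm (M.row i + M.row j)) {x : m → ZMod 2} (hx0 : x ≠ 0)
    (hx2 : hammingNorm x ≤ 2) : d ≤ hammingNorm (x ᵥ* M) := by
  have hpos : 0 < hammingNorm x := hammingNorm_pos_iff.2 hx0
  unfold hammingNorm at hpos hx2
  rw [vecMul_eq_sum_support]
  obtain h | h : #{i | x i ≠ 0} = 1 ∨ #{i | x i ≠ 0} = 2 := by omega
  · obtain ⟨i, hi⟩ := card_eq_one.1 h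
    rw [hi, sum_singleton]
    exact h1 i
  · obtain ⟨i, j, hij, hij'⟩ := card_eq_two.1 h
    rw [hij', sum_pair hij]
    exact h2 i j hij

end LowWeight

section Golay

def golayRightBlock : Matrix (Fin 12) (Fin 12) (ZMod 2) :=
  golayGenMatrix.submatrix id (Fin.natAdd 12)

def golayRightGenMatrix : Matrix (Fin 12) (Fin 24) (ZMod 2) :=
  golayRightBlockᵀ * golayGenMatrix

theorem golayGenMatrix_submatrix_castAdd : golayGenMatrix.submatrix id (Fin.castAdd 12) = 1 := by
  decide +kernel

theorem golayRightBlock_mul_transpose : golayRightBlock * golayRightBlockᵀ = 1 := by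
  decide +kernel

theorem golayGenMatrix_row_dotProduct_row (i j : Fin 12) :
    golayGenMatrix.row i ⬝ᵥ golayGenMatrix.row j = 0 := by
  revert i j; decide +kernel

theorem hammingNorm_golayGenMatrix_row (i : Fin 12) : hammingNorm (golayGenMatrix.row i) = 8 := by
  revert i; decide +kernel

theorem le_hammingNorm_golayGenMatrix_row_add_row {i j : Fin 12} (hij : i ≠ j) :
    8 ≤ hammingNorm (golayGenMatrix.row i + golayGenMatrix.row j) := by
  revert i j; decide +kernel

theorem le_hammingNorm_golayRightGenMatrix_row (i : Fin 12) :
    8 ≤ hammingNorm (golayRightGenMatrix.row i) := by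
  revert i; decide +kernel

theorem le_hammingNorm_golayRightGenMatrix_row_add_row {i j : Fin 12} (hij : i ≠ j) :
    8 ≤ hammingNorm (golayRightGenMatrix.row i + golayRightGenMatrix.row j) := by
  revert i j; decide +kernel

theorem exists_vecMul_eq_of_mem_golayCode {c : Fin 24 → ZMod 2} (hc : c ∈ golayCode) :
    ∃ x, x ᵥ* golayGenMatrix = c := by
  rw [golayCode, ← row_def, ← range_vecMulLinear] at hc
  obtain ⟨x, rfl⟩ := hc
  exact ⟨x, rfl⟩

theorem four_dvd_hammingNorm_of_mem_golayCode {c : Fin 24 → ZMod 2} (hc : c ∈ golayCode) :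
    4 ∣ hammingNorm c := by
  refine four_dvd_hammingNorm_of_mem_span ?_ ?_ hc
  · rintro _ ⟨i, rfl⟩ _ ⟨j, rfl⟩
    exact golayGenMatrix_row_dotProduct_row i j
  · rintro _ ⟨i, rfl⟩
    exact ⟨2, hammingNorm_golayGenMatrix_row i⟩

theorem vecMul_golayGenMatrix_eq (x : Fin 12 → ZMod 2) :
    x ᵥ* golayGenMatrix = (x ᵥ* golayRightBlock) ᵥ* golayRightGenMatrix := by
  rw [golayRightGenMatrix, vecMul_vecMul, ← Matrix.mul_assoc, golayRightBlock_mul_transpose,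
    Matrix.one_mul]

end Golay

/-- Every nonzero codeword of the binary Golay code has Hamming weight at least 8. -/
theorem stmt10 (c : Fin 24 → ZMod 2) (hc : c ∈ golayCode) (hc0 : c ≠ 0) :
    8 ≤ (Finset.univ.filter fun i => c i ≠ 0).card := by
  change 8 ≤ hammingNorm c
  have h4 := four_dvd_hammingNorm_of_mem_golayCode hc
  have hpos := hammingNorm_pos_iff.2 hc0
  obtain ⟨x, rfl⟩ := exists_vecMul_eq_of_mem_golayCode hc
  have hsplit := hammingNorm_vecMul_of_submatrix_castAdd_eq_one golayGenMatrix_submatrix_castAdd x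
  by_contra hlt
  obtain hx | hy : hammingNorm x ≤ 2 ∨ hammingNorm (x ᵥ* golayRightBlock) ≤ 2 := by
    unfold golayRightBlock
    omega
  · have hx0 : x ≠ 0 := fun h => hc0 (by rw [h, zero_vecMul])
    exact hlt <| le_hammingNorm_vecMul_of_hammingNorm_le_two
      (fun i => (hammingNorm_golayGenMatrix_row i).ge)
      (fun _ _ => le_hammingNorm_golayGenMatrix_row_add_row) hx0 hx
  · rw [vecMul_golayGenMatrix_eq] at hc0 hlt
    have hy0 : x ᵥ* golayRightBlock ≠ 0 := fun h => hc0 (by rw [h, zero_vecMul])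
    exact hlt <| le_hammingNorm_vecMul_of_hammingNorm_le_two
      le_hammingNorm_golayRightGenMatrix_row
      (fun _ _ => le_hammingNorm_golayRightGenMatrix_row_add_row) hy0 hy
end
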